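/- arXiv:0710.1415 — 2 statements merged into one kernel-verified Lean document; each statement's English description precedes it below -/
import Mathlib

section
/- Let ζ be a primitive 20th root of unity, A = ζ^2, κ = ζ^{−1}, δ = −A^{−2} − A^2, and η = (1/5)(2ζ + ζ^3 + ζ^5 − 3ζ^7) in Q(ζ). With H_0 = 1 and H_n (n ≥ 1) given by H_n = (A^2 − A^{−2})^{−1} ∑_{r=0}^{n−1} C(n−1,r) A^{(n−2r+1)^2−1}(A^{2(n−2r+1)} − A^{−2(n−2r+1)}), define S = ∑_{k=0}^{5} C(5,k) δ^k H_k − A^{−3} δ ∑_{k=0}^{5} C(5,k) δ^k H_{k+1}. Then η^7 · S = −2ζ + 4ζ^3 − ζ^5 − 2ζ^7. -/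
set_option maxRecDepth 8000
set_option maxHeartbeats 1600000

theorem quantum_invariant_M5 (ζ : ℂ) (hζ : IsPrimitiveRoot ζ 20)
    (A κ δ η : ℂ) (hA : A = ζ ^ 2) (hκ : κ = ζ⁻¹)
    (hδ : δ = -A ^ (-2 : ℤ) - A ^ 2)
    (hη : η = (1 / 5) * (2 * ζ + ζ ^ 3 + ζ ^ 5 - 3 * ζ ^ 7))
    (H : ℕ → ℂ) (hH0 : H 0 = 1)
    (hH : ∀ n : ℕ, 1 ≤ n → H n = (A ^ 2 - A ^ (-2 : ℤ))⁻¹ *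
      ∑ r ∈ Finset.range n, (Nat.choose (n - 1) r : ℂ) *
        A ^ ((((n : ℤ) - 2 * (r : ℤ) + 1) ^ 2 - 1)) *
        (A ^ (2 * ((n : ℤ) - 2 * (r : ℤ) + 1)) -
          A ^ (-(2 * ((n : ℤ) - 2 * (r : ℤ) + 1)))))
    (S : ℂ)
    (hS : S = (∑ k ∈ Finset.range 6, (Nat.choose 5 k : ℂ) * δ ^ k * H k) -
      A ^ (-3 : ℤ) * δ *
        ∑ k ∈ Finset.range 6, (Nat.choose 5 k : ℂ) * δ ^ k * H (k + 1)) :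
    η ^ 7 * S = -2 * ζ + 4 * ζ ^ 3 - ζ ^ 5 - 2 * ζ ^ 7 := by
  have hne : ζ ≠ 0 := hζ.ne_zero (by norm_num)
  have h20 : ζ ^ 20 = 1 := hζ.pow_eq_one
  have h10ne : ζ ^ 10 ≠ 1 := hζ.pow_ne_one_of_pos_of_lt (by norm_num) (by norm_num)
  have h4ne : ζ ^ 4 ≠ 1 := hζ.pow_ne_one_of_pos_of_lt (by norm_num) (by norm_num)
  have h10 : ζ ^ 10 = -1 := by
    rcases mul_eq_zero.mp (show (ζ ^ 10 - 1) * (ζ ^ 10 + 1) = 0 by linear_combination h20) with h | h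
    · exact absurd (by linear_combination h) h10ne
    · linear_combination h
  have hmin : ζ ^ 8 - ζ ^ 6 + ζ ^ 4 - ζ ^ 2 + 1 = 0 := by
    rcases mul_eq_zero.mp (show (ζ ^ 2 + 1) * (ζ ^ 8 - ζ ^ 6 + ζ ^ 4 - ζ ^ 2 + 1) = 0 by
        linear_combination h10) with h | h
    · exact absurd (by linear_combination (ζ ^ 2 - 1) * h) h4ne
    · exact h
  have keyA : ∀ m : ℤ, A ^ m = ζ ^ (2 * m % 20).toNat := by
    intro m
    have hnn : (0 : ℤ) ≤ 2 * m % 20 := Int.emod_nonneg _ (by norm_num)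
    calc A ^ m = ζ ^ (2 * m) := by
          rw [hA, ← zpow_natCast ζ 2, ← zpow_mul]; norm_num
    _ = ζ ^ ((20 : ℤ) * (2 * m / 20) + 2 * m % 20) := by rw [Int.mul_ediv_add_emod]
    _ = (ζ ^ (20 : ℤ)) ^ (2 * m / 20) * ζ ^ (2 * m % 20) := by
        rw [zpow_add₀ hne, zpow_mul]
    _ = ζ ^ (2 * m % 20).toNat := by
        rw [show (ζ : ℂ) ^ (20 : ℤ) = 1 by rw [show (20 : ℤ) = ((20 : ℕ) : ℤ) by norm_num,
          zpow_natCast, h20], one_zpow, one_mul, ← zpow_natCast ζ (2 * m % 20).toNat,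
          Int.toNat_of_nonneg hnn]
  have hv : (A ^ 2 - A ^ (-2 : ℤ))⁻¹ = -(1/5) + (2/5) * ζ ^ 2 - (3/5) * ζ ^ 4 - (1/5) * ζ ^ 6 := by
    have h1 : A ^ 2 - A ^ (-2 : ℤ) = ζ ^ 4 - ζ ^ 16 := by
      rw [keyA, hA]
      norm_num
      simp only [Int.reduceToNat]
      ring
    rw [h1]
    refine inv_eq_of_mul_eq_one_right ?_
    linear_combination ((1/5) * ζ ^ 14 + (4/5) * ζ ^ 12 + (1/5) * ζ ^ 10 + (-1/5) * ζ ^ 8 + (1/5) * ζ ^ 6 + (-1/5) * ζ ^ 4 + (-1) * ζ ^ 2 + (-1)) * hmin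
  have E1 : H 1 = ζ ^ 2 - 1 := by
    rw [hH 1 (by norm_num), hv]
    simp only [Finset.sum_range_succ, Finset.sum_range_zero, keyA]
    norm_num [Nat.choose]
    simp only [Int.reduceToNat]
    linear_combination ((1/5) * ζ ^ 16 + (4/5) * ζ ^ 14 + (-1) * ζ ^ 10 + (-1) * ζ ^ 4 + 1) * hmin
  have E2 : H 2 = ζ ^ 2 := by
    rw [hH 2 (by norm_num), hv]
    simp only [Finset.sum_range_succ, Finset.sum_range_zero, keyA]
    norm_num [Nat.choose]
    simp only [Int.reduceToNat]
    linear_combination ((-1/5) * ζ ^ 26 + (-4/5) * ζ ^ 24 + 1 * ζ ^ 20 + (6/5) * ζ ^ 14 + (4/5) * ζ ^ 12 + (-4/5) * ζ ^ 10 + (-1/5) * ζ ^ 8 + (1/5) * ζ ^ 6 + (-6/5) * ζ ^ 4 + (-1) * ζ ^ 2) * hmin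
  have E3 : H 3 = 2 * ζ ^ 2 - 1 := by
    rw [hH 3 (by norm_num), hv]
    simp only [Finset.sum_range_succ, Finset.sum_range_zero, keyA]
    norm_num [Nat.choose]
    simp only [Int.reduceToNat]
    linear_combination ((-1/5) * ζ ^ 24 + (-4/5) * ζ ^ 22 + (-1/5) * ζ ^ 20 + (1/5) * ζ ^ 18 + (1/5) * ζ ^ 16 + (9/5) * ζ ^ 14 + 1 * ζ ^ 12 + (-1) * ζ ^ 10 + (-2) * ζ ^ 4 + (-1) * ζ ^ 2 + 1) * hmin
  have E4 : H 4 = 3 * ζ ^ 2 - 1 := by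
    rw [hH 4 (by norm_num), hv]
    simp only [Finset.sum_range_succ, Finset.sum_range_zero, keyA]
    norm_num [Nat.choose]
    simp only [Int.reduceToNat]
    linear_combination ((-3/5) * ζ ^ 26 + (-12/5) * ζ ^ 24 + 3 * ζ ^ 20 + (17/5) * ζ ^ 14 + (8/5) * ζ ^ 12 + (-13/5) * ζ ^ 10 + (-2/5) * ζ ^ 8 + (2/5) * ζ ^ 6 + (-17/5) * ζ ^ 4 + (-2) * ζ ^ 2 + 1) * hmin
  have E5 : H 5 = 5 * ζ ^ 2 - 2 := by
    rw [hH 5 (by norm_num), hv]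
    simp only [Finset.sum_range_succ, Finset.sum_range_zero, keyA]
    norm_num [Nat.choose]
    simp only [Int.reduceToNat]
    linear_combination ((-3/5) * ζ ^ 24 + (-12/5) * ζ ^ 22 + (-3/5) * ζ ^ 20 + (3/5) * ζ ^ 18 + (2/5) * ζ ^ 16 + (23/5) * ζ ^ 14 + 3 * ζ ^ 12 + (-2) * ζ ^ 10 + (-5) * ζ ^ 4 + (-3) * ζ ^ 2 + 2) * hmin
  have E6 : H 6 = 8 * ζ ^ 2 - 3 := by
    rw [hH 6 (by norm_num), hv]
    simp only [Finset.sum_range_succ, Finset.sum_range_zero, keyA]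
    norm_num [Nat.choose]
    simp only [Int.reduceToNat]
    linear_combination ((-8/5) * ζ ^ 26 + (-32/5) * ζ ^ 24 + 8 * ζ ^ 20 + 9 * ζ ^ 14 + 4 * ζ ^ 12 + (-7) * ζ ^ 10 + (-1) * ζ ^ 8 + 1 * ζ ^ 6 + (-9) * ζ ^ 4 + (-5) * ζ ^ 2 + 3) * hmin
  have hδ' : δ = -ζ ^ 16 - ζ ^ 4 := by
    rw [hδ, keyA, hA]
    norm_num
    try simp only [Int.reduceToNat]
    try ring
  have hA3 : A ^ (-3 : ℤ) = ζ ^ 14 := by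
    rw [keyA]
    norm_num
    try simp only [Int.reduceToNat]
  have hS2 : S = 275 * ζ ^ 6 - 275 * ζ ^ 4 + 175 := by
    rw [hS, hA3]
    norm_num [Finset.sum_range_succ, Finset.sum_range_zero, hH0, E1, E2, E3, E4, E5, E6, hδ', Nat.choose]
    linear_combination ((-8) * ζ ^ 104 + (-5) * ζ ^ 102 + 3 * ζ ^ 100 + 8 * ζ ^ 94 + (-43) * ζ ^ 92 + (-33) * ζ ^ 90 + 43 * ζ ^ 88 + 15 * ζ ^ 86 + (-18) * ζ ^ 84 + 43 * ζ ^ 82 + (-87) * ζ ^ 80 + (-118) * ζ ^ 78 + 155 * ζ ^ 76 + 88 * ζ ^ 74 + (-126) * ζ ^ 72 + 69 * ζ ^ 70 + (-32) * ζ ^ 68 + (-255) * ζ ^ 66 + 222 * ζ ^ 64 + 251 * ζ ^ 62 + (-304) * ζ ^ 60 + (-23) * ζ ^ 58 + 205 * ζ ^ 56 + (-292) * ζ ^ 54 + 34 * ζ ^ 52 + 404 * ζ ^ 50 + (-287) * ζ ^ 48 + (-245) * ζ ^ 46 + 404 * ζ ^ 44 + (-74) * ζ ^ 42 + (-306) *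 ζ ^ 40 + 317 * ζ ^ 38 + 45 * ζ ^ 36 + (-374) * ζ ^ 34 + 226 * ζ ^ 32 + 241 * ζ ^ 30 + (-359) * ζ ^ 28 + (-25) * ζ ^ 26 + 330 * ζ ^ 24 + (-176) * ζ ^ 22 + (-172) * ζ ^ 20 + 289 * ζ ^ 18 + (-20) * ζ ^ 16 + (-290) * ζ ^ 14 + 194 * ζ ^ 12 + 184 * ζ ^ 10 + (-280) * ζ ^ 8 + 280 * ζ ^ 4 + (-174) * ζ ^ 2 + (-174)) * hmin
  rw [hS2, hη]
  linear_combination ((-24057/3125) * ζ ^ 47 + (56133/3125) * ζ ^ 45 + (24057/3125) * ζ ^ 43 + (-40257/3125) * ζ ^ 41 + (-177093/3125) * ζ ^ 39 + (1809/125) * ζ ^ 37 + (206724/3125) * ζ ^ 35 + (163946/3125) * ζ ^ 33 + (-157696/3125) * ζ ^ 31 + (-226279/3125) * ζ ^ 29 + (-72483/3125) * ζ ^ 27 + (122549/3125) * ζ ^ 25 + (142346/3125) * ζ ^ 23 + (43379/3125) * ζ ^ 21 + (-58904/3125) * ζ ^ 19 + (-64619/3125) * ζ ^ 17 + (-7417/3125)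 * ζ ^ 15 + (13082/3125) * ζ ^ 13 + (3318/3125) * ζ ^ 11 + (10282/3125) * ζ ^ 9 + (10271/3125) * ζ ^ 7 + (-3) * ζ ^ 5 + (-2) * ζ ^ 3 + 2 * ζ) * hmin
end

section
/- Let ζ be a primitive 20th root of unity and O = Z[ζ]. The element x = −2ζ + 4ζ^3 − ζ^5 − 2ζ^7 is not congruent modulo 5·O to any element of the form n·ζ^{−m} with n, m ∈ Z. -/
open Polynomial

theorem not_congruent_to_power_of_kappa (ζ : ℂ) (hζ : IsPrimitiveRoot ζ 20)
    (n m : ℤ) :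
    ¬∃ y ∈ Algebra.adjoin ℤ {ζ},
      (-2 * ζ + 4 * ζ ^ 3 - ζ ^ 5 - 2 * ζ ^ 7) - (n : ℂ) * ζ ^ (-m) = 5 * y := by
  rintro ⟨y, hy, heq⟩
  rw [Algebra.adjoin_singleton_eq_range_aeval] at hy
  obtain ⟨p, hp⟩ := hy
  have hζ0 : ζ ≠ 0 := hζ.ne_zero (by norm_num)
  have h20 : ζ ^ (20 : ℕ) = 1 := hζ.pow_eq_one
  set k : ℕ := ((-m) % 20).toNat with hkdef
  have hk : (k : ℤ) = (-m) % 20 := Int.toNat_of_nonneg (Int.emod_nonneg _ (by norm_num))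
  have hklt : k < 20 := by
    have := Int.emod_lt_of_pos (-m) (show (0:ℤ) < 20 by norm_num)
    omega
  have hzk : ζ ^ (-m) = ζ ^ k := by
    have h1 : ζ ^ ((20:ℤ) * (-m / 20)) = 1 := by
      rw [zpow_mul, show ((20:ℤ)) = ((20:ℕ):ℤ) by norm_num, zpow_natCast, h20, one_zpow]
    have h2 : -m = (20:ℤ) * (-m / 20) + (k : ℤ) := by rw [hk]; omega
    rw [h2, zpow_add₀ hζ0, h1, one_mul, zpow_natCast]
  set q : ℤ[X] := C (-2) * X + C 4 * X ^ 3 - X ^ 5 - C 2 * X ^ 7 - C n * X ^ k - C 5 * p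
    with hqdef
  have hp' : aeval ζ p = y := hp
  have hq : aeval ζ q = 0 := by
    simp only [hqdef, map_add, map_sub, map_mul, map_pow, aeval_X, aeval_C, map_intCast,
      algebraMap_int_eq, eq_intCast, hp']
    rw [hzk] at heq
    push_cast
    linear_combination heq
  set f : ℤ[X] := X ^ 8 - X ^ 6 + X ^ 4 - X ^ 2 + 1 with hfdef
  have hint : IsIntegral ℤ ζ := hζ.isIntegral (by norm_num)
  have hcyc : cyclotomic 20 ℤ = minpoly ℤ ζ := cyclotomic_eq_minpoly hζ (by norm_num)
  have hdeg : (minpoly ℤ ζ).natDegree = 8 := by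
    rw [← hcyc, natDegree_cyclotomic]; decide
  have h10 : ζ ^ (10 : ℕ) = -1 := by
    have hsq : (ζ ^ (10:ℕ) - 1) * (ζ ^ (10:ℕ) + 1) = 0 := by linear_combination h20
    rcases mul_eq_zero.mp hsq with h | h
    · exact absurd (sub_eq_zero.mp h)
        (hζ.pow_ne_one_of_pos_of_lt (by norm_num) (by norm_num))
    · linear_combination h
  have h2 : ζ ^ (2 : ℕ) + 1 ≠ 0 := by
    intro h
    have h4 : ζ ^ (4 : ℕ) = 1 := by linear_combination (ζ^2 - 1) * h
    exact hζ.pow_ne_one_of_pos_of_lt (by norm_num) (by norm_num) h4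
  have hroot : aeval ζ f = 0 := by
    have hmul : (ζ ^ 8 - ζ ^ 6 + ζ ^ 4 - ζ ^ 2 + 1) * (ζ ^ 2 + 1) = 0 := by
      linear_combination h10
    rcases mul_eq_zero.mp hmul with h | h
    · simp only [hfdef, map_add, map_sub, map_pow, aeval_X, map_one]
      exact h
    · exact absurd h h2
  have hdvd : minpoly ℤ ζ ∣ f := minpoly.isIntegrallyClosed_dvd hint hroot
  have hfmonic : f.Monic := by unfold f; monicity!
  have hfdeg : f.natDegree ≤ 8 := by unfold f; compute_degree
  have hfeq : f = minpoly ℤ ζ :=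
    Polynomial.eq_of_monic_of_dvd_of_natDegree_le (minpoly.monic hint) hfmonic hdvd
      (by omega)
  have hfq : f ∣ q := hfeq ▸ (minpoly.isIntegrallyClosed_dvd hint hq)
  obtain ⟨r, hr⟩ := hfq
  set M : Matrix (Fin 4) (Fin 4) (ZMod 5) := !![2,1,0,0; 0,2,1,0; 0,0,2,1; 0,0,0,2] with hM
  have hfM : aeval M f = 0 := by
    simp only [hfdef, map_add, map_sub, map_pow, aeval_X, map_one]
    decide
  have hqM : aeval M q = 0 := by rw [hr, map_mul, hfM, zero_mul]
  have hxM : -2 * M + 4 * M ^ 3 - M ^ 5 - 2 * M ^ 7 = ((n : ZMod 5)) • M ^ k := by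
    simp only [hqdef, map_add, map_sub, map_mul, map_pow, aeval_X, aeval_C, map_intCast,
      algebraMap_int_eq, eq_intCast] at hqM
    push_cast at hqM
    have hn : ((n : ℤ) : Matrix (Fin 4) (Fin 4) (ZMod 5)) = ((n : ZMod 5)) • 1 := by
      rw [Matrix.smul_one_eq_diagonal, Matrix.diagonal_intCast]
    have h5 : (5 : Matrix (Fin 4) (Fin 4) (ZMod 5)) = 0 := by decide
    rw [h5, zero_mul, sub_zero, hn, smul_mul_assoc, one_mul] at hqM
    have := sub_eq_zero.mp hqM
    push_cast at this ⊢
    exact this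
  have key : ∀ a : ZMod 5, ∀ j : Fin 20,
      -2 * M + 4 * M ^ 3 - M ^ 5 - 2 * M ^ 7 ≠ a • M ^ (j : ℕ) := by decide
  exact key ((n : ZMod 5)) ⟨k, hklt⟩ hxM
end
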